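/- (Eckart–Young, Frobenius norm) For a real N×L matrix M with SVD M = Σ σ_i u_i v_iᵀ and any matrix B of rank at most k, the rank-k truncation M(k) satisfies ‖M − M(k)‖_F ≤ ‖M − B‖_F, with ‖M − M(k)‖_F² = Σ_{i>k} σ_i². -/

import Mathlib

open Matrix

/-- Frobenius norm of a real matrix. -/
noncomputable def frobNorm {N L : ℕ} (A : Matrix (Fin N) (Fin L) ℝ) : ℝ :=
  Real.sqrt (∑ i, ∑ j, (A i j) ^ 2)


lemma exists_proj {N L k : ℕ} (C : Matrix (Fin N) (Fin L) ℝ) (hC : C.rank ≤ k) :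
    ∃ P : Matrix (Fin N) (Fin N) ℝ, Pᵀ = P ∧ P * P = P ∧ P * C = C ∧
      Matrix.trace P ≤ (k : ℝ) := by
  classical
  set W : Submodule ℝ (EuclideanSpace ℝ (Fin N)) :=
    LinearMap.range (Matrix.toEuclideanLin C) with hW
  have hfin : Module.finrank ℝ W = C.rank := by
    rw [Matrix.rank_eq_finrank_range_toLin C (PiLp.basisFun 2 ℝ (Fin N))
      (PiLp.basisFun 2 ℝ (Fin L))]
    rfl
  set r := Module.finrank ℝ W with hr
  set b := stdOrthonormalBasis ℝ W with hb
  set Q : Matrix (Fin N) (Fin r) ℝ :=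
    Matrix.of (fun a j => ((b j : EuclideanSpace ℝ (Fin N)) : Fin N → ℝ) a) with hQ
  have hQtQ : Qᵀ * Q = 1 := by
    ext j l
    simp only [Matrix.mul_apply, Matrix.transpose_apply, Matrix.one_apply, hQ, Matrix.of_apply]
    have := orthonormal_iff_ite.mp b.orthonormal j l
    rw [Submodule.coe_inner, PiLp.inner_apply] at this
    simp only [RCLike.inner_apply, conj_trivial] at this
    rw [← this]
    exact Finset.sum_congr rfl fun _ _ => mul_comm _ _
  refine ⟨Q * Qᵀ, by simp [Matrix.transpose_mul], ?_, ?_, ?_⟩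
  · rw [Matrix.mul_assoc, ← Matrix.mul_assoc Qᵀ, hQtQ, Matrix.one_mul]
  · -- P * C = C
    have hfix : ∀ x : W, (Q * Qᵀ) *ᵥ (x : EuclideanSpace ℝ (Fin N)) = (x : EuclideanSpace ℝ (Fin N)) := by
      intro x
      have hx := b.sum_repr' x
      funext a
      have hxa : ((x : EuclideanSpace ℝ (Fin N)) : Fin N → ℝ) a
          = ∑ j, (inner ℝ (b j) x : ℝ) * ((b j : EuclideanSpace ℝ (Fin N)) : Fin N → ℝ) a := by
        conv_lhs => rw [← hx]
        rw [show ((((∑ j, (inner ℝ (b j) x : ℝ) • b j : W)) : EuclideanSpace ℝ (Fin N)) : Fin N → ℝ)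
            = ∑ j, (inner ℝ (b j) x : ℝ) • (((b j : EuclideanSpace ℝ (Fin N))) : Fin N → ℝ) by
          push_cast
          rw [WithLp.ofLp_sum]; rfl]
        exact Finset.sum_apply _ _ _
      rw [Matrix.mulVec, dotProduct]
      simp only [Matrix.mul_apply, Matrix.transpose_apply, hQ, Matrix.of_apply]
      conv_rhs => rw [hxa]
      simp only [Finset.sum_mul]
      rw [Finset.sum_comm]
      refine Finset.sum_congr rfl fun j _ => ?_
      rw [Submodule.coe_inner, PiLp.inner_apply]
      simp only [RCLike.inner_apply, conj_trivial]
      rw [Finset.sum_mul]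
      exact Finset.sum_congr rfl fun m _ => by ring
    ext a j
    have hcol : WithLp.toLp 2 (fun a => C a j) ∈ W := by
      refine ⟨(WithLp.equiv 2 (Fin L → ℝ)).symm (Pi.single j 1), ?_⟩
      rw [Matrix.toEuclideanLin_apply_piLp_toLp]
      apply congrArg
      funext a
      simp [Matrix.mulVec, dotProduct, Pi.single_apply]
    have := congrFun (hfix ⟨_, hcol⟩) a
    simp only [Matrix.mulVec, dotProduct] at this
    rw [Matrix.mul_apply]
    exact this
  · -- trace
    have : Matrix.trace (Q * Qᵀ) = Matrix.trace (Qᵀ * Q) := Matrix.trace_mul_comm Q Qᵀ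
    rw [this, hQtQ, Matrix.trace_one]
    rw [← hfin] at hC
    simp only [Fintype.card_fin]
    exact_mod_cast hC

lemma key_comb {n k : ℕ} (hk : k ≤ n) (lam c : Fin n → ℝ)
    (hlam0 : ∀ i, 0 ≤ lam i) (hmono : ∀ i j : Fin n, i ≤ j → lam j ≤ lam i)
    (hc0 : ∀ i, 0 ≤ c i) (hc1 : ∀ i, c i ≤ 1) (hcs : ∑ i, c i ≤ (k : ℝ)) :
    ∑ i, lam i * c i ≤ ∑ i ∈ Finset.univ.filter (fun i : Fin n => (i : ℕ) < k), lam i := by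
  classical
  set t : ℝ := if h : k < n then lam ⟨k, h⟩ else 0 with ht
  have ht0 : 0 ≤ t := by
    rw [ht]; split
    · exact hlam0 _
    · exact le_refl 0
  have hlow : ∀ i : Fin n, (i : ℕ) < k → t ≤ lam i := by
    intro i hi
    rw [ht]; split
    · next h => exact hmono i ⟨k, h⟩ (by simpa [Fin.le_def] using hi.le)
    · exact hlam0 i
  have hhigh : ∀ i : Fin n, k ≤ (i : ℕ) → lam i ≤ t := by
    intro i hi
    have h : k < n := lt_of_le_of_lt hi i.isLt
    rw [ht, dif_pos h]
    exact hmono ⟨k, h⟩ i (by simpa [Fin.le_def] using hi)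
  set s := Finset.univ.filter (fun i : Fin n => (i : ℕ) < k) with hs
  have hcard : s.card = k := by
    rcases lt_or_eq_of_le hk with h | h
    · have : s = Finset.Iio (⟨k, h⟩ : Fin n) := by
        ext i; simp [hs, Finset.mem_Iio, Fin.lt_def]
      rw [this, Fin.card_Iio]
    · have : s = Finset.univ := by
        ext i
        simp only [hs, Finset.mem_filter, Finset.mem_univ, true_and, iff_true]
        exact h ▸ i.isLt
      rw [this, Finset.card_univ, Fintype.card_fin, ← h]
  have hmemc : ∀ i : Fin n, i ∈ sᶜ → k ≤ (i : ℕ) := by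
    intro i hi
    simp only [hs, Finset.compl_filter, Finset.mem_filter] at hi
    omega
  have hsplit : ∑ i ∈ s, lam i * c i = ∑ i ∈ s, lam i * (c i - 1) + ∑ i ∈ s, lam i := by
    rw [← Finset.sum_add_distrib]
    exact Finset.sum_congr rfl fun i _ => by ring
  have htotal : ∑ i, lam i * c i = ∑ i ∈ s, lam i * c i + ∑ i ∈ sᶜ, lam i * c i :=
    (Finset.sum_add_sum_compl s _).symm
  have b1 : ∑ i ∈ s, lam i * (c i - 1) ≤ ∑ i ∈ s, t * (c i - 1) := by
    refine Finset.sum_le_sum fun i hi => ?_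
    have hik : (i : ℕ) < k := by simpa [hs] using (Finset.mem_filter.mp hi).2
    exact mul_le_mul_of_nonpos_right (hlow i hik) (by linarith [hc1 i])
  have b2 : ∑ i ∈ sᶜ, lam i * c i ≤ ∑ i ∈ sᶜ, t * c i := by
    refine Finset.sum_le_sum fun i hi => ?_
    exact mul_le_mul_of_nonneg_right (hhigh i (hmemc i hi)) (hc0 i)
  have e1 : ∑ i ∈ s, t * (c i - 1) = t * (∑ i ∈ s, c i) - t * k := by
    simp only [mul_sub, mul_one, Finset.sum_sub_distrib, Finset.sum_const, ← Finset.mul_sum,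
      hcard, nsmul_eq_mul]
    ring
  have e2 : ∑ i ∈ sᶜ, t * c i = t * (∑ i ∈ sᶜ, c i) := by rw [Finset.mul_sum]
  have e3 : ∑ i ∈ s, c i + ∑ i ∈ sᶜ, c i = ∑ i, c i := Finset.sum_add_sum_compl s c
  have final : t * (∑ i ∈ s, c i) - t * k + t * (∑ i ∈ sᶜ, c i) ≤ 0 := by
    have : t * (∑ i, c i) ≤ t * k := mul_le_mul_of_nonneg_left hcs ht0
    nlinarith [e3]
  linarith

noncomputable def fsq {N L : ℕ} (A : Matrix (Fin N) (Fin L) ℝ) : ℝ := ∑ i, ∑ j, (A i j) ^ 2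

lemma fsq_nonneg {N L : ℕ} (A : Matrix (Fin N) (Fin L) ℝ) : 0 ≤ fsq A := by
  unfold fsq; positivity

lemma fsq_eq_trace {N L : ℕ} (A : Matrix (Fin N) (Fin L) ℝ) :
    fsq A = Matrix.trace (Aᵀ * A) := by
  unfold fsq
  rw [Matrix.trace]
  simp only [Matrix.diag_apply, Matrix.mul_apply, Matrix.transpose_apply]
  rw [Finset.sum_comm]
  simp [sq]

lemma fsq_add_orth {N L : ℕ} (X Y : Matrix (Fin N) (Fin L) ℝ) (h : Xᵀ * Y = 0) :
    fsq (X + Y) = fsq X + fsq Y := by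
  have h2 : Yᵀ * X = 0 := by
    have := congrArg Matrix.transpose h
    rwa [Matrix.transpose_mul, Matrix.transpose_transpose, Matrix.transpose_zero] at this
  rw [fsq_eq_trace, fsq_eq_trace, fsq_eq_trace, Matrix.transpose_add, Matrix.add_mul,
    Matrix.mul_add, Matrix.mul_add, h, h2]
  simp

lemma fsq_conj {N L : ℕ} (U : Matrix (Fin N) (Fin N) ℝ) (V : Matrix (Fin L) (Fin L) ℝ)
    (X : Matrix (Fin N) (Fin L) ℝ) (hU : Uᵀ * U = 1) (hV : Vᵀ * V = 1) :
    fsq (U * X * Vᵀ) = fsq X := by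
  rw [fsq_eq_trace, fsq_eq_trace]
  have ht : (U * X * Vᵀ)ᵀ = V * (Xᵀ * Uᵀ) := by
    rw [Matrix.transpose_mul, Matrix.transpose_mul, Matrix.transpose_transpose]
  rw [ht]
  have e1 : V * (Xᵀ * Uᵀ) * (U * X * Vᵀ) = V * ((Xᵀ * X) * Vᵀ) := by
    simp only [Matrix.mul_assoc]
    rw [← Matrix.mul_assoc Uᵀ U, hU, Matrix.one_mul]
  rw [e1, Matrix.trace_mul_comm, Matrix.mul_assoc, hV, Matrix.mul_one]

lemma inner_collapse {L : ℕ} (n : ℕ) (g : ℝ) :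
    ∑ j : Fin L, (if n = (j : ℕ) then g else 0) = if n < L then g else 0 := by
  by_cases h : n < L
  · rw [if_pos h, Finset.sum_eq_single (⟨n, h⟩ : Fin L)]
    · simp
    · intro j _ hj
      rw [if_neg fun hc => hj (Fin.ext hc.symm)]
    · intro h'; exact absurd (Finset.mem_univ _) h'
  · rw [if_neg h]
    exact Finset.sum_eq_zero fun j _ => if_neg fun hc => h (by rw [hc]; exact j.isLt)

lemma conv_sum {N L k : ℕ} (σ : ℕ → ℝ) :
    ∑ i : Fin N, (if k ≤ (i : ℕ) ∧ (i : ℕ) < L then σ (i : ℕ) ^ 2 else 0)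
      = ∑ i ∈ Finset.Ico k (min N L), σ i ^ 2 := by
  rw [Fin.sum_univ_eq_sum_range (fun i => if k ≤ i ∧ i < L then σ i ^ 2 else 0) N,
    ← Finset.sum_filter]
  congr 1
  ext x
  simp only [Finset.mem_filter, Finset.mem_range, Finset.mem_Ico, lt_min_iff]
  omega

lemma sum_fin_eq_sum_fin {L k : ℕ} (hkL : k ≤ L) (f : ℕ → ℝ) (hf : ∀ n, k ≤ n → f n = 0) :
    ∑ j : Fin L, f (j : ℕ) = ∑ i : Fin k, f (i : ℕ) := by
  rw [Fin.sum_univ_eq_sum_range, Fin.sum_univ_eq_sum_range]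
  rw [← Finset.sum_subset (Finset.range_subset_range.mpr hkL)]
  intro x hx hnx
  exact hf x (by simp only [Finset.mem_range] at hnx; omega)

lemma hDD_lemma {N L : ℕ} (σ : ℕ → ℝ) :
    (Matrix.of fun (i : Fin N) (j : Fin L) => if (i : ℕ) = (j : ℕ) then σ (i : ℕ) else 0) *
      (Matrix.of fun (i : Fin N) (j : Fin L) => if (i : ℕ) = (j : ℕ) then σ (i : ℕ) else 0)ᵀ
    = Matrix.diagonal (fun i : Fin N => if (i : ℕ) < L then σ (i : ℕ) ^ 2 else 0) := by
  ext m i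
  rw [Matrix.mul_apply]
  by_cases hmi : m = i
  · subst hmi
    simp only [Matrix.diagonal_apply_eq, Matrix.transpose_apply, Matrix.of_apply]
    have : ∀ j : Fin L, (if (m : ℕ) = (j : ℕ) then σ (m : ℕ) else 0) *
        (if (m : ℕ) = (j : ℕ) then σ (m : ℕ) else 0)
        = (if (m : ℕ) = (j : ℕ) then σ (m : ℕ) ^ 2 else 0) := by
      intro j; split <;> ring
    rw [Finset.sum_congr rfl fun j _ => this j, inner_collapse]
  · rw [Matrix.diagonal_apply_ne _ hmi]
    refine Finset.sum_eq_zero fun j _ => ?_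
    simp only [Matrix.transpose_apply, Matrix.of_apply]
    by_cases h1 : (m : ℕ) = (j : ℕ)
    · rw [if_pos h1, if_neg (fun h2 : (i : ℕ) = (j : ℕ) => hmi (Fin.ext (h1.trans h2.symm))), mul_zero]
    · rw [if_neg h1, zero_mul]

lemma main_ineq {N L k : ℕ} (hkN : k ≤ N) (hkL : k ≤ L) (σ : ℕ → ℝ)
    (hσpos : ∀ i, 0 ≤ σ i) (hσmono : ∀ i j, i ≤ j → σ j ≤ σ i)
    (C : Matrix (Fin N) (Fin L) ℝ) (hC : C.rank ≤ k) :
    ∑ i ∈ Finset.Ico k (min N L), σ i ^ 2 ≤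
      fsq ((Matrix.of fun (i : Fin N) (j : Fin L) =>
        if (i : ℕ) = (j : ℕ) then σ (i : ℕ) else 0) - C) := by
  classical
  set D : Matrix (Fin N) (Fin L) ℝ :=
    Matrix.of (fun i j => if (i : ℕ) = (j : ℕ) then σ (i : ℕ) else 0) with hD
  set lam : Fin N → ℝ := fun i => if (i : ℕ) < L then σ (i : ℕ) ^ 2 else 0 with hlam
  obtain ⟨P, hPt, hPP, hPC, hPtr⟩ := exists_proj C hC
  set c : Fin N → ℝ := fun i => P i i with hc
  have hdiag : ∀ i, P i i = ∑ m, (P i m) ^ 2 := by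
    intro i
    conv_lhs => rw [← hPP]
    rw [Matrix.mul_apply]
    refine Finset.sum_congr rfl fun m _ => ?_
    have : P m i = P i m := congrFun (congrFun hPt.symm m) i
    rw [this]; ring
  have hc0 : ∀ i, 0 ≤ c i := by
    intro i; rw [hc]; simp only; rw [hdiag i]; positivity
  have hc1 : ∀ i, c i ≤ 1 := by
    intro i
    have h2 : (P i i) ^ 2 ≤ P i i := by
      conv_rhs => rw [hdiag i]
      exact Finset.single_le_sum (f := fun m => (P i m) ^ 2)
        (fun m _ => sq_nonneg _) (Finset.mem_univ i)
    nlinarith [hc0 i]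
  have hcsum : ∑ i, c i ≤ (k : ℝ) := by
    have : ∑ i, c i = Matrix.trace P := by rw [Matrix.trace]; rfl
    rw [this]; exact hPtr
  have hlam0 : ∀ i, 0 ≤ lam i := by
    intro i; rw [hlam]; dsimp only; split
    · positivity
    · exact le_refl 0
  have hlammono : ∀ i j : Fin N, i ≤ j → lam j ≤ lam i := by
    intro i j hij
    rw [hlam]; dsimp only
    by_cases hjL : (j : ℕ) < L
    · have hiL : (i : ℕ) < L := lt_of_le_of_lt (Fin.le_def.mp hij) hjL
      rw [if_pos hjL, if_pos hiL]
      exact pow_le_pow_left₀ (hσpos _) (hσmono _ _ (Fin.le_def.mp hij)) 2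
    · rw [if_neg hjL]
      split
      · positivity
      · exact le_refl 0
  have hkey := key_comb hkN lam c hlam0 hlammono hc0 hc1 hcsum
  -- trace identity
  have hDDd := hDD_lemma (N := N) (L := L) σ
  have htr : Matrix.trace (P * (D * Dᵀ)) = ∑ i, lam i * c i := by
    rw [hD, hDDd, Matrix.trace]
    simp only [Matrix.diag_apply, Matrix.mul_diagonal]
    exact Finset.sum_congr rfl fun i _ => by rw [hlam, hc]; ring
  -- orthogonal decomposition
  have hPt' : (1 - P)ᵀ = 1 - P := by rw [Matrix.transpose_sub, Matrix.transpose_one, hPt]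
  have hsub : D - C = (1 - P) * D + (P * D - C) := by
    rw [Matrix.sub_mul, Matrix.one_mul]; abel
  have hzero : (1 - P) * (P * D - C) = 0 := by
    rw [Matrix.mul_sub, Matrix.sub_mul, Matrix.sub_mul, Matrix.one_mul, Matrix.one_mul,
      ← Matrix.mul_assoc, hPP, hPC]
    abel
  have horth : fsq (D - C) = fsq ((1 - P) * D) + fsq (P * D - C) := by
    rw [hsub]
    apply fsq_add_orth
    rw [Matrix.transpose_mul, hPt', Matrix.mul_assoc, hzero, Matrix.mul_zero]
  have h1mP : (1 - P) * (1 - P) = 1 - P := by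
    rw [Matrix.sub_mul, Matrix.mul_sub, Matrix.mul_sub, Matrix.one_mul, Matrix.one_mul,
      Matrix.mul_one, hPP]
    abel
  have e5 : fsq ((1 - P) * D) = Matrix.trace (Dᵀ * D) - Matrix.trace (P * (D * Dᵀ)) := by
    rw [fsq_eq_trace, Matrix.transpose_mul, hPt']
    have : Dᵀ * (1 - P) * ((1 - P) * D) = Dᵀ * ((1 - P) * D) := by
      rw [Matrix.mul_assoc Dᵀ (1 - P), ← Matrix.mul_assoc (1 - P) (1 - P), h1mP]
    rw [this, Matrix.sub_mul, Matrix.one_mul, Matrix.mul_sub, Matrix.trace_sub]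
    congr 1
    rw [← Matrix.mul_assoc, Matrix.trace_mul_comm, ← Matrix.mul_assoc, Matrix.trace_mul_comm]
  have e6 : Matrix.trace (Dᵀ * D) = ∑ i, lam i := by
    rw [Matrix.trace_mul_comm, hD, hDDd, Matrix.trace_diagonal]
  -- sum conversions
  have hsplitsum : ∑ i ∈ Finset.univ.filter (fun i : Fin N => (i : ℕ) < k), lam i
      + ∑ i ∈ Finset.univ.filter (fun i : Fin N => ¬ (i : ℕ) < k), lam i = ∑ i, lam i :=
    Finset.sum_filter_add_sum_filter_not _ _ _
  have hconv : ∑ i ∈ Finset.univ.filter (fun i : Fin N => ¬ (i : ℕ) < k), lam i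
      = ∑ i ∈ Finset.Ico k (min N L), σ i ^ 2 := by
    rw [Finset.sum_filter, ← conv_sum (N := N) (L := L) (k := k) σ]
    refine Finset.sum_congr rfl fun i _ => ?_
    rw [hlam]; dsimp only
    split_ifs <;> first | rfl | (exfalso; omega)
  have hfq : 0 ≤ fsq (P * D - C) := fsq_nonneg _
  linarith [horth, e5, e6, htr, hkey, hsplitsum, hconv,
    fsq_nonneg ((1 - P) * D)]

lemma fsq_tail {N L k : ℕ} (σ : ℕ → ℝ) :
    fsq ((Matrix.of fun (i : Fin N) (j : Fin L) => if (i : ℕ) = (j : ℕ) then σ (i : ℕ) else 0)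
      - (Matrix.of fun (i : Fin N) (j : Fin L) =>
          if (i : ℕ) = (j : ℕ) ∧ (i : ℕ) < k then σ (i : ℕ) else 0))
    = ∑ i ∈ Finset.Ico k (min N L), σ i ^ 2 := by
  unfold fsq
  rw [← conv_sum (N := N) (L := L) (k := k) σ]
  refine Finset.sum_congr rfl fun i _ => ?_
  have hentry : ∀ j : Fin L,
      ((Matrix.of fun (i : Fin N) (j : Fin L) => if (i : ℕ) = (j : ℕ) then σ (i : ℕ) else 0)
        - (Matrix.of fun (i : Fin N) (j : Fin L) =>
          if (i : ℕ) = (j : ℕ) ∧ (i : ℕ) < k then σ (i : ℕ) else 0)) i j ^ 2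
      = (if (i : ℕ) = (j : ℕ) then (if (i : ℕ) < k then 0 else σ (i : ℕ) ^ 2) else 0) := by
    intro j
    simp only [Matrix.sub_apply, Matrix.of_apply]
    by_cases h1 : (i : ℕ) = (j : ℕ)
    · rw [if_pos h1]
      by_cases h3 : (i : ℕ) < k
      · rw [if_pos (⟨h1, h3⟩ : (i : ℕ) = (j : ℕ) ∧ (i : ℕ) < k), if_pos h1, if_pos h3]; ring
      · rw [if_neg (fun hc : (i : ℕ) = (j : ℕ) ∧ (i : ℕ) < k => h3 hc.2), if_pos h1,
          if_neg h3]; ring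
    · rw [if_neg h1, if_neg (fun hc : (i : ℕ) = (j : ℕ) ∧ (i : ℕ) < k => h1 hc.1), if_neg h1]
      ring
  rw [Finset.sum_congr rfl fun j _ => hentry j, inner_collapse]
  split_ifs <;> first | rfl | (exfalso; omega)

lemma Mk_eq {N L k : ℕ} (hkN : k ≤ N) (hkL : k ≤ L)
    (U : Matrix (Fin N) (Fin N) ℝ) (V : Matrix (Fin L) (Fin L) ℝ) (σ : ℕ → ℝ) :
    (∑ i : Fin k, σ (i : ℕ) •
      Matrix.vecMulVec (fun a => U a (Fin.castLE hkN i)) (fun b => V b (Fin.castLE hkL i)))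
    = U * (Matrix.of fun (i : Fin N) (j : Fin L) =>
        if (i : ℕ) = (j : ℕ) ∧ (i : ℕ) < k then σ (i : ℕ) else 0) * Vᵀ := by
  ext a b
  set f : ℕ → ℝ := fun n => if h : n < k then
    σ n * (U a ⟨n, lt_of_lt_of_le h hkN⟩ * V b ⟨n, lt_of_lt_of_le h hkL⟩) else 0 with hf
  have claimB : (∑ i : Fin k, σ (i : ℕ) •
      Matrix.vecMulVec (fun a => U a (Fin.castLE hkN i)) (fun b => V b (Fin.castLE hkL i))) a b
      = ∑ i : Fin k, f (i : ℕ) := by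
    rw [Matrix.sum_apply]
    refine Finset.sum_congr rfl fun i _ => ?_
    rw [hf]
    dsimp only
    rw [dif_pos i.isLt]
    have e1 : Fin.castLE hkN i = (⟨(i : ℕ), lt_of_lt_of_le i.isLt hkN⟩ : Fin N) := rfl
    have e2 : Fin.castLE hkL i = (⟨(i : ℕ), lt_of_lt_of_le i.isLt hkL⟩ : Fin L) := rfl
    simp [Matrix.smul_apply, Matrix.vecMulVec_apply, e1, e2]
  have claimA : (U * (Matrix.of fun (i : Fin N) (j : Fin L) =>
        if (i : ℕ) = (j : ℕ) ∧ (i : ℕ) < k then σ (i : ℕ) else 0) * Vᵀ) a b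
      = ∑ j : Fin L, f (j : ℕ) := by
    rw [Matrix.mul_apply]
    refine Finset.sum_congr rfl fun j _ => ?_
    rw [Matrix.transpose_apply, Matrix.mul_apply, hf]
    dsimp only
    by_cases h : (j : ℕ) < k
    · rw [dif_pos h]
      have hjN : (j : ℕ) < N := lt_of_lt_of_le h hkN
      rw [Finset.sum_eq_single (⟨(j : ℕ), hjN⟩ : Fin N)]
      · have hj : ((⟨(j : ℕ), hjN⟩ : Fin N) : ℕ) = (j : ℕ) := rfl
        rw [Matrix.of_apply, if_pos ⟨hj, by rw [hj]; exact h⟩]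
        have : (⟨(j : ℕ), lt_of_lt_of_le h hkL⟩ : Fin L) = j := Fin.ext rfl
        rw [this]
        ring
      · intro i _ hi
        rw [Matrix.of_apply, if_neg, mul_zero]
        rintro ⟨h1, h2⟩
        exact hi (Fin.ext h1)
      · intro h'; exact absurd (Finset.mem_univ _) h'
    · rw [dif_neg h]
      rw [Finset.sum_eq_zero, zero_mul]
      intro i _
      rw [Matrix.of_apply, if_neg, mul_zero]
      rintro ⟨h1, h2⟩
      exact h (h1 ▸ h2)
  rw [claimA, claimB, sum_fin_eq_sum_fin hkL f (fun n hn => dif_neg (by omega))]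

lemma frobNorm_eq {N L : ℕ} (A : Matrix (Fin N) (Fin L) ℝ) :
    frobNorm A = Real.sqrt (fsq A) := rfl

theorem eckart_young_frobenius
    (N L k : ℕ) (hkN : k ≤ N) (hkL : k ≤ L)
    (U : Matrix (Fin N) (Fin N) ℝ) (V : Matrix (Fin L) (Fin L) ℝ)
    (σ : ℕ → ℝ)
    (hU : Uᵀ * U = 1) (hV : Vᵀ * V = 1)
    (hσpos : ∀ i, 0 ≤ σ i) (hσmono : ∀ i j, i ≤ j → σ j ≤ σ i)
    (M : Matrix (Fin N) (Fin L) ℝ)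
    (hM : M = U * (Matrix.of fun (i : Fin N) (j : Fin L) =>
      if (i : ℕ) = (j : ℕ) then σ (i : ℕ) else 0) * Vᵀ)
    (Mk : Matrix (Fin N) (Fin L) ℝ)
    (hMk : Mk = ∑ i : Fin k, σ (i : ℕ) •
      Matrix.vecMulVec (fun a => U a (Fin.castLE hkN i)) (fun b => V b (Fin.castLE hkL i)))
    (B : Matrix (Fin N) (Fin L) ℝ) (hB : B.rank ≤ k) :
    frobNorm (M - Mk) ≤ frobNorm (M - B) ∧
      (frobNorm (M - Mk)) ^ 2 = ∑ i ∈ Finset.Ico k (min N L), σ i ^ 2 := by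
  set D : Matrix (Fin N) (Fin L) ℝ :=
    Matrix.of (fun i j => if (i : ℕ) = (j : ℕ) then σ (i : ℕ) else 0) with hD
  set Dk : Matrix (Fin N) (Fin L) ℝ :=
    Matrix.of (fun i j => if (i : ℕ) = (j : ℕ) ∧ (i : ℕ) < k then σ (i : ℕ) else 0) with hDk
  have hUU : U * Uᵀ = 1 := mul_eq_one_comm.mp hU
  have hVV : V * Vᵀ = 1 := mul_eq_one_comm.mp hV
  have hMk' : Mk = U * Dk * Vᵀ := by rw [hMk, Mk_eq hkN hkL U V σ]
  have hMMk : M - Mk = U * (D - Dk) * Vᵀ := by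
    rw [hM, hMk', ← Matrix.sub_mul, ← Matrix.mul_sub]
  set C : Matrix (Fin N) (Fin L) ℝ := Uᵀ * B * V with hC
  have hMB : M - B = U * (D - C) * Vᵀ := by
    have hBC : U * C * Vᵀ = B := by
      rw [hC, ← Matrix.mul_assoc, ← Matrix.mul_assoc, hUU, Matrix.one_mul,
        Matrix.mul_assoc, hVV, Matrix.mul_one]
    rw [hM, ← hBC, ← Matrix.sub_mul, ← Matrix.mul_sub]
  have hrankC : C.rank ≤ k := by
    calc C.rank ≤ (Uᵀ * B).rank := Matrix.rank_mul_le_left _ _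
    _ ≤ B.rank := Matrix.rank_mul_le_right _ _
    _ ≤ k := hB
  have hfsqMk : fsq (M - Mk) = ∑ i ∈ Finset.Ico k (min N L), σ i ^ 2 := by
    rw [hMMk, fsq_conj U V _ hU hV, hD, hDk, fsq_tail]
  have hfsqB : ∑ i ∈ Finset.Ico k (min N L), σ i ^ 2 ≤ fsq (M - B) := by
    rw [hMB, fsq_conj U V _ hU hV]
    exact main_ineq hkN hkL σ hσpos hσmono C hrankC
  constructor
  · rw [frobNorm_eq, frobNorm_eq]
    exact Real.sqrt_le_sqrt (by linarith [hfsqMk, hfsqB])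
  · rw [frobNorm_eq, Real.sq_sqrt (fsq_nonneg _), hfsqMk]
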